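/- arXiv:2208.02936 — 3 statements merged into one kernel-verified Lean document; each statement's English description precedes it below -/
import Mathlib

section
/- Let P₁,...,P_m be orthogonal projection matrices on ℝⁿ (i.e., symmetric idempotent matrices) such that the intersection of their images is {0}. Then any product P_{i₁} P_{i₂} ⋯ P_{i_k} in which every index in {1,...,m} appears at least once has operator 2-norm strictly less than 1. -/
open Matrix

/-- Operator 2-norm of a real matrix, via the Euclidean spaces. -/
noncomputable def spec {k l : ℕ} (M : Matrix (Fin k) (Fin l) ℝ) : ℝ :=
  ‖LinearMap.toContinuousLinearMap (Matrix.toEuclideanLin (𝕜 := ℝ) M)‖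

section aux

variable {n : ℕ}

local notation "E" => EuclideanSpace ℝ (Fin n)

lemma euclid_mul (A B : Matrix (Fin n) (Fin n) ℝ) (x : E) :
    toEuclideanLin (𝕜 := ℝ) (A * B) x
      = toEuclideanLin (𝕜 := ℝ) A (toEuclideanLin (𝕜 := ℝ) B x) := by
  rw [Matrix.toEuclideanLin_apply, Matrix.toEuclideanLin_apply, Matrix.toEuclideanLin_apply,
    WithLp.ofLp_toLp, Matrix.mulVec_mulVec]

lemma euclid_one (x : E) :
    toEuclideanLin (𝕜 := ℝ) (1 : Matrix (Fin n) (Fin n) ℝ) x = x := by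
  rw [Matrix.toEuclideanLin_apply, Matrix.one_mulVec]

/-- inner product identity for symmetric idempotent -/
lemma proj_inner (A : Matrix (Fin n) (Fin n) ℝ) (hA : Aᵀ = A) (hA2 : A * A = A)
    (x : E) : inner ℝ (toEuclideanLin (𝕜 := ℝ) A x) (toEuclideanLin (𝕜 := ℝ) A x)
      = (inner ℝ x (toEuclideanLin (𝕜 := ℝ) A x) : ℝ) := by
  have hherm : A.IsHermitian := by
    simpa [Matrix.IsHermitian, Matrix.conjTranspose_eq_transpose_of_trivial] using hA
  have hsym := Matrix.isHermitian_iff_isSymmetric.1 hherm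
  have := hsym (toEuclideanLin (𝕜 := ℝ) A x) x
  calc (inner ℝ (toEuclideanLin (𝕜 := ℝ) A x) (toEuclideanLin (𝕜 := ℝ) A x) : ℝ)
      = inner ℝ (toEuclideanLin (𝕜 := ℝ) A (toEuclideanLin (𝕜 := ℝ) A x)) x := by rw [this]
    _ = inner ℝ (toEuclideanLin (𝕜 := ℝ) (A * A) x) x := by
        rw [euclid_mul]
    _ = inner ℝ (toEuclideanLin (𝕜 := ℝ) A x) x := by rw [hA2]
    _ = inner ℝ x (toEuclideanLin (𝕜 := ℝ) A x) := real_inner_comm _ _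

lemma proj_norm_le (A : Matrix (Fin n) (Fin n) ℝ) (hA : Aᵀ = A) (hA2 : A * A = A)
    (x : E) : ‖toEuclideanLin (𝕜 := ℝ) A x‖ ≤ ‖x‖ := by
  set y := toEuclideanLin (𝕜 := ℝ) A x with hy
  have h1 : ‖y‖ ^ 2 = inner ℝ x y := by
    rw [← real_inner_self_eq_norm_sq]; exact proj_inner A hA hA2 x
  have h2 : (inner ℝ x y : ℝ) ≤ ‖x‖ * ‖y‖ := real_inner_le_norm x y
  by_cases h : ‖y‖ = 0
  · rw [h]; exact norm_nonneg x
  · have hpos : 0 < ‖y‖ := lt_of_le_of_ne (norm_nonneg y) (Ne.symm h)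
    nlinarith [h1, h2]

lemma proj_fix (A : Matrix (Fin n) (Fin n) ℝ) (hA : Aᵀ = A) (hA2 : A * A = A)
    (x : E) (hx : ‖x‖ ≤ ‖toEuclideanLin (𝕜 := ℝ) A x‖) :
    toEuclideanLin (𝕜 := ℝ) A x = x := by
  set y := toEuclideanLin (𝕜 := ℝ) A x with hy
  have h1 : ‖y‖ ^ 2 = inner ℝ x y := by
    rw [← real_inner_self_eq_norm_sq]; exact proj_inner A hA hA2 x
  have hd : ‖x - y‖ ^ 2 = ‖x‖ ^ 2 - 2 * inner ℝ x y + ‖y‖ ^ 2 := by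
    rw [← real_inner_self_eq_norm_sq, ← real_inner_self_eq_norm_sq,
      ← real_inner_self_eq_norm_sq]
    simp only [inner_sub_left, inner_sub_right]
    rw [real_inner_comm y x]; ring
  have hyx : ‖y‖ ≤ ‖x‖ := proj_norm_le A hA hA2 x
  have hxy : ‖x‖ = ‖y‖ := le_antisymm hx hyx
  have : ‖x - y‖ ^ 2 = 0 := by rw [hd, ← h1, hxy]; ring
  have : x - y = 0 := by
    have := pow_eq_zero_iff (n := 2) (by norm_num) |>.1 this
    exact norm_eq_zero.1 this
  have := sub_eq_zero.1 this
  exact this.symm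

end aux

theorem product_of_projections_contraction
    (n m : ℕ) (hm : 0 < m) (P : Fin m → Matrix (Fin n) (Fin n) ℝ)
    (hsymm : ∀ i, (P i)ᵀ = P i) (hidem : ∀ i, P i * P i = P i)
    (htriv : (⨅ i : Fin m, LinearMap.range (Matrix.mulVecLin (P i))) = ⊥)
    (l : List (Fin m)) (hall : ∀ i : Fin m, i ∈ l) :
    spec ((l.map P).prod) < 1 := by
  classical
  set E := EuclideanSpace ℝ (Fin n)
  -- composition lemma
  have hcomp : ∀ (A B : Matrix (Fin n) (Fin n) ℝ) (x : E),
      toEuclideanLin (𝕜 := ℝ) (A * B) x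
        = toEuclideanLin (𝕜 := ℝ) A (toEuclideanLin (𝕜 := ℝ) B x) := by
    intro A B x
    exact euclid_mul A B x
  have hone : ∀ x : E, toEuclideanLin (𝕜 := ℝ) (1 : Matrix (Fin n) (Fin n) ℝ) x = x :=
    euclid_one
  -- norm nonincreasing for list products
  have hle : ∀ (t : List (Fin m)) (x : E),
      ‖toEuclideanLin (𝕜 := ℝ) (t.map P).prod x‖ ≤ ‖x‖ := by
    intro t
    induction t with
    | nil => intro x; simp [hone x]
    | cons a t ih =>
      intro x
      rw [List.map_cons, List.prod_cons, hcomp]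
      exact le_trans (proj_norm_le _ (hsymm a) (hidem a) _) (ih x)
  -- fixing lemma
  have hfix : ∀ (t : List (Fin m)) (x : E),
      ‖x‖ ≤ ‖toEuclideanLin (𝕜 := ℝ) (t.map P).prod x‖ →
      toEuclideanLin (𝕜 := ℝ) (t.map P).prod x = x ∧
        ∀ i ∈ t, toEuclideanLin (𝕜 := ℝ) (P i) x = x := by
    intro t
    induction t with
    | nil =>
      intro x _
      refine ⟨by simp [hone x], ?_⟩
      intro i hi
      simp at hi
    | cons a t ih =>
      intro x hx
      rw [List.map_cons, List.prod_cons, hcomp] at hx ⊢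
      have h1 : ‖x‖ ≤ ‖toEuclideanLin (𝕜 := ℝ) (t.map P).prod x‖ :=
        le_trans hx (proj_norm_le _ (hsymm a) (hidem a) _)
      obtain ⟨hprod, hall'⟩ := ih x h1
      rw [hprod] at hx ⊢
      have hax : toEuclideanLin (𝕜 := ℝ) (P a) x = x :=
        proj_fix _ (hsymm a) (hidem a) x hx
      refine ⟨hax, ?_⟩
      intro i hi
      rcases List.mem_cons.1 hi with h | h
      · rw [h]; exact hax
      · exact hall' i h
  -- the continuous linear map
  set T := LinearMap.toContinuousLinearMap
    (Matrix.toEuclideanLin (𝕜 := ℝ) ((l.map P).prod)) with hT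
  have hTapp : ∀ x : E, T x = toEuclideanLin (𝕜 := ℝ) (l.map P).prod x := fun x => rfl
  -- strict inequality on the sphere
  have hsphere : ∀ x : E, ‖x‖ = 1 → ‖T x‖ < 1 := by
    intro x hx
    by_contra h
    push_neg at h
    have hx1 : ‖x‖ ≤ ‖toEuclideanLin (𝕜 := ℝ) (l.map P).prod x‖ := by
      rw [← hTapp, hx]; exact h
    obtain ⟨-, hfixall⟩ := hfix l x hx1
    -- x belongs to every range
    have hmem : ∀ i : Fin m,
        (WithLp.equiv 2 (Fin n → ℝ)) x ∈ LinearMap.range (Matrix.mulVecLin (P i)) := by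
      intro i
      refine ⟨(WithLp.equiv 2 (Fin n → ℝ)) x, ?_⟩
      have := hfixall i (hall i)
      have h2 : (WithLp.equiv 2 (Fin n → ℝ)) (toEuclideanLin (𝕜 := ℝ) (P i) x)
          = (WithLp.equiv 2 (Fin n → ℝ)) x := by rw [this]
      rw [WithLp.equiv_apply, WithLp.equiv_apply, Matrix.ofLp_toEuclideanLin_apply] at h2
      simpa [Matrix.mulVecLin] using h2
    have : (WithLp.equiv 2 (Fin n → ℝ)) x ∈
        (⨅ i : Fin m, LinearMap.range (Matrix.mulVecLin (P i))) :=
      Submodule.mem_iInf _ |>.2 hmem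
    rw [htriv] at this
    have hx0 : (WithLp.equiv 2 (Fin n → ℝ)) x = 0 := this
    have : x = 0 := by
      have := congrArg (WithLp.equiv 2 (Fin n → ℝ)).symm hx0
      simpa using this
    rw [this, norm_zero] at hx
    norm_num at hx
  rcases Nat.eq_zero_or_pos n with hn | hn
  · -- trivial space
    have : ∀ x : E, x = 0 := by
      intro x
      ext i
      exact absurd i.2 (by omega)
    have hle0 : ‖T‖ ≤ 0 := by
      refine ContinuousLinearMap.opNorm_le_bound T le_rfl ?_
      intro x
      rw [this x]
      simp
    calc spec ((l.map P).prod) = ‖T‖ := rfl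
      _ ≤ 0 := hle0
      _ < 1 := by norm_num
  · -- compactness argument
    set z : E := EuclideanSpace.single (⟨0, hn⟩ : Fin n) (1 : ℝ) with hzdef
    have hz : ‖z‖ = 1 := by
      rw [hzdef, EuclideanSpace.norm_single]
      norm_num
    have hcompact : IsCompact (Metric.sphere (0 : E) 1) := isCompact_sphere 0 1
    have hnonempty : (Metric.sphere (0 : E) 1).Nonempty := by
      exact ⟨z, by simp [mem_sphere_iff_norm, hz]⟩
    have hcont : ContinuousOn (fun x : E => ‖T x‖) (Metric.sphere (0 : E) 1) :=
      (T.continuous.norm).continuousOn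
    obtain ⟨x₀, hx₀mem, hx₀max⟩ := hcompact.exists_isMaxOn hnonempty hcont
    have hx₀norm : ‖x₀‖ = 1 := by simpa [mem_sphere_iff_norm] using hx₀mem
    have hbound : ‖T‖ ≤ ‖T x₀‖ := by
      refine ContinuousLinearMap.opNorm_le_bound T (norm_nonneg _) ?_
      intro x
      rcases eq_or_ne x 0 with rfl | hx
      · simp
      · have hxn : ‖x‖ ≠ 0 := norm_ne_zero_iff.2 hx
        have hmem : (‖x‖⁻¹ • x) ∈ Metric.sphere (0 : E) 1 := by
          simp [mem_sphere_iff_norm, norm_smul, abs_of_nonneg (norm_nonneg x),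
            inv_mul_cancel₀ hxn]
        have hthis : ‖T (‖x‖⁻¹ • x)‖ ≤ ‖T x₀‖ := hx₀max hmem
        rw [T.map_smul, norm_smul, norm_inv, norm_norm] at hthis
        have this : ‖x‖⁻¹ * ‖T x‖ ≤ ‖T x₀‖ := hthis
        calc ‖T x‖ = ‖x‖ * (‖x‖⁻¹ * ‖T x‖) := by field_simp
          _ ≤ ‖x‖ * ‖T x₀‖ := by
              apply mul_le_mul_of_nonneg_left _ (norm_nonneg x)
              exact this
          _ = ‖T x₀‖ * ‖x‖ := mul_comm _ _
    calc spec ((l.map P).prod) = ‖T‖ := rfl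
      _ ≤ ‖T x₀‖ := hbound
      _ < 1 := hsphere x₀ hx₀norm
end

section
/- Let P₁,...,P_m be orthogonal projections on ℝⁿ with ⋂ᵢ image(Pᵢ) = {0}, and let 𝒞 be the set of all products of (m-1)²+1 of these projections in which each projection occurs at least once. Then ρ := max{‖M‖₂ : M ∈ 𝒞} exists and satisfies 0 ≤ ρ < 1. -/
open Matrix

section aux

open RealInnerProductSpace

variable {E : Type*} [NormedAddCommGroup E] [InnerProductSpace ℝ E]

/-- For a symmetric idempotent `T`, `‖x‖² = ‖T x‖² + ‖x - T x‖²`. -/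
lemma proj_sq (T : E →L[ℝ] E) (hs : ∀ x y : E, (inner ℝ (T x) (y) : ℝ) = (inner ℝ (x) (T y) : ℝ))
    (h2 : ∀ x, T (T x) = T x) (x : E) :
    ‖x‖ ^ 2 = ‖T x‖ ^ 2 + ‖x - T x‖ ^ 2 := by
  have horth : (inner ℝ (T x) (x - T x) : ℝ) = 0 := by
    have h1 : (inner ℝ (T x) (T x) : ℝ) = inner ℝ (T x) x := by
      rw [hs x (T x), h2, real_inner_comm]
    rw [inner_sub_right, h1, sub_self]
  have hx : x = T x + (x - T x) := by abel
  calc ‖x‖ ^ 2 = ‖T x + (x - T x)‖ ^ 2 := by rw [← hx]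
    _ = ‖T x‖ ^ 2 + 2 * (inner ℝ (T x) (x - T x) : ℝ) + ‖x - T x‖ ^ 2 := norm_add_sq_real _ _
    _ = ‖T x‖ ^ 2 + ‖x - T x‖ ^ 2 := by rw [horth]; ring

lemma proj_norm_le_s2 (T : E →L[ℝ] E) (hs : ∀ x y : E, (inner ℝ (T x) (y) : ℝ) = (inner ℝ (x) (T y) : ℝ))
    (h2 : ∀ x, T (T x) = T x) (x : E) : ‖T x‖ ≤ ‖x‖ := by
  have := proj_sq T hs h2 x
  nlinarith [norm_nonneg (T x), norm_nonneg x, sq_nonneg ‖x - T x‖]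

lemma proj_norm_eq (T : E →L[ℝ] E) (hs : ∀ x y : E, (inner ℝ (T x) (y) : ℝ) = (inner ℝ (x) (T y) : ℝ))
    (h2 : ∀ x, T (T x) = T x) (x : E) (h : ‖T x‖ = ‖x‖) : T x = x := by
  have := proj_sq T hs h2 x
  rw [h] at this
  have : ‖x - T x‖ ^ 2 = 0 := by linarith
  have : ‖x - T x‖ = 0 := by nlinarith [norm_nonneg (x - T x)]
  have := norm_eq_zero.mp this
  rw [sub_eq_zero] at this
  exact this.symm

/-- If every factor fixes `x`, the product fixes `x`. -/
lemma prod_fix {m : ℕ} (Q : Fin m → (E →L[ℝ] E)) (l : List (Fin m)) (x : E)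
    (h : ∀ i ∈ l, Q i x = x) : (l.map Q).prod x = x := by
  induction l with
  | nil => simp
  | cons a l ih =>
    simp only [List.map_cons, List.prod_cons, ContinuousLinearMap.mul_apply]
    rw [ih (fun i hi => h i (List.mem_cons_of_mem a hi)), h a (List.mem_cons_self)]

lemma prod_le {m : ℕ} (Q : Fin m → (E →L[ℝ] E))
    (hs : ∀ i, ∀ x y : E, (inner ℝ (Q i x) (y) : ℝ) = (inner ℝ (x) (Q i y) : ℝ))
    (h2 : ∀ i x, Q i (Q i x) = Q i x) (l : List (Fin m)) (x : E) :
    ‖(l.map Q).prod x‖ ≤ ‖x‖ := by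
  induction l with
  | nil => simp
  | cons a l ih =>
    simp only [List.map_cons, List.prod_cons, ContinuousLinearMap.mul_apply]
    exact le_trans (proj_norm_le_s2 (Q a) (hs a) (h2 a) _) ih

lemma prod_eq_fix {m : ℕ} (Q : Fin m → (E →L[ℝ] E))
    (hs : ∀ i, ∀ x y : E, (inner ℝ (Q i x) (y) : ℝ) = (inner ℝ (x) (Q i y) : ℝ))
    (h2 : ∀ i x, Q i (Q i x) = Q i x) (l : List (Fin m)) (x : E)
    (h : ‖(l.map Q).prod x‖ = ‖x‖) : ∀ i ∈ l, Q i x = x := by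
  induction l with
  | nil => simp
  | cons a l ih =>
    simp only [List.map_cons, List.prod_cons, ContinuousLinearMap.mul_apply] at h
    have h1 : ‖(l.map Q).prod x‖ = ‖x‖ := by
      have hle := proj_norm_le_s2 (Q a) (hs a) (h2 a) ((l.map Q).prod x)
      have hle2 := prod_le Q hs h2 l x
      rw [h] at hle
      linarith
    have hfix := ih h1
    have hrest : (l.map Q).prod x = x := prod_fix Q l x hfix
    rw [hrest] at h
    have ha : Q a x = x := proj_norm_eq (Q a) (hs a) (h2 a) x h
    intro i hi
    rcases List.mem_cons.mp hi with rfl | hi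
    · exact ha
    · exact hfix i hi

/-- A continuous linear map on a finite-dimensional space with `‖T x‖ < ‖x‖` for all
`x ≠ 0` has operator norm `< 1`. -/
lemma opnorm_lt_one [FiniteDimensional ℝ E] (T : E →L[ℝ] E)
    (h : ∀ x : E, x ≠ 0 → ‖T x‖ < ‖x‖) : ‖T‖ < 1 := by
  by_cases hE : Subsingleton E
  · have : T = 0 := by ext x; exact Subsingleton.elim _ _
    rw [this]; simp
  · have : Nontrivial E := not_subsingleton_iff_nontrivial.mp hE
    have hsph : (Metric.sphere (0 : E) 1).Nonempty :=
      NormedSpace.sphere_nonempty.mpr zero_le_one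
    have hcpt : IsCompact (Metric.sphere (0 : E) 1) := isCompact_sphere 0 1
    obtain ⟨x₀, hx₀, hmax⟩ := hcpt.exists_isMaxOn hsph
      ((continuous_norm.comp T.continuous).continuousOn)
    set c := ‖T x₀‖ with hc
    have hx₀n : ‖x₀‖ = 1 := by simpa using hx₀
    have hclt : c < 1 := by
      have := h x₀ (by intro h0; rw [h0] at hx₀n; simp at hx₀n)
      rw [hx₀n] at this; exact this
    have hTle : ‖T‖ ≤ c := by
      apply ContinuousLinearMap.opNorm_le_bound _ (norm_nonneg _)
      intro x
      by_cases hx : x = 0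
      · simp [hx]
      · have hxn : ‖x‖ ≠ 0 := norm_ne_zero_iff.mpr hx
        set u := ‖x‖⁻¹ • x with hu
        have hun : ‖u‖ = 1 := by
          rw [hu, norm_smul, norm_inv, norm_norm, inv_mul_cancel₀ hxn]
        have hus : u ∈ Metric.sphere (0 : E) 1 := by simpa using hun
        have : ‖T u‖ ≤ c := hmax hus
        have hTx : T x = ‖x‖ • T u := by
          rw [hu, T.map_smul, smul_smul, mul_inv_cancel₀ hxn, one_smul]
        rw [hTx, norm_smul, norm_norm, mul_comm]
        exact mul_le_mul_of_nonneg_right this (norm_nonneg x)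
    linarith

end aux

theorem rho_exists_lt_one
    (n m : ℕ) (hm : 0 < m) (P : Fin m → Matrix (Fin n) (Fin n) ℝ)
    (hsymm : ∀ i, (P i)ᵀ = P i) (hidem : ∀ i, P i * P i = P i)
    (htriv : (⨅ i : Fin m, LinearMap.range (Matrix.mulVecLin (P i))) = ⊥) :
    ∃ ρ : ℝ,
      IsGreatest
        (spec '' {M : Matrix (Fin n) (Fin n) ℝ |
          ∃ l : List (Fin m), l.length = (m - 1) ^ 2 + 1 ∧ (∀ i : Fin m, i ∈ l) ∧
            M = (l.map P).prod}) ρ ∧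
      0 ≤ ρ ∧ ρ < 1 := by
  classical
  set L := (m - 1) ^ 2 + 1 with hL
  set S := spec '' {M : Matrix (Fin n) (Fin n) ℝ |
      ∃ l : List (Fin m), l.length = L ∧ (∀ i : Fin m, i ∈ l) ∧
        M = (l.map P).prod} with hS
  -- the CLM versions
  set Q : Fin m → (EuclideanSpace ℝ (Fin n) →L[ℝ] EuclideanSpace ℝ (Fin n)) :=
    fun i => Matrix.toEuclideanCLM (𝕜 := ℝ) (P i) with hQ
  have hspec : ∀ M : Matrix (Fin n) (Fin n) ℝ,
      spec M = ‖Matrix.toEuclideanCLM (𝕜 := ℝ) M‖ := fun M => rfl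
  -- symmetry of the Q i
  have hQs : ∀ i, ∀ x y : EuclideanSpace ℝ (Fin n), (inner ℝ (Q i x) (y) : ℝ) = (inner ℝ (x) (Q i y) : ℝ) := by
    intro i x y
    have hadj : ContinuousLinearMap.adjoint (Q i) = Q i := by
      rw [← ContinuousLinearMap.star_eq_adjoint, hQ]
      simp only [← map_star]
      congr 1
      rw [Matrix.star_eq_conjTranspose, Matrix.conjTranspose_eq_transpose_of_trivial, hsymm]
    calc (inner ℝ (Q i x) (y) : ℝ) = inner ℝ (ContinuousLinearMap.adjoint (Q i) x) y := by rw [hadj]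
      _ = inner ℝ x (Q i y) := ContinuousLinearMap.adjoint_inner_left _ _ _
  -- idempotence of the Q i
  have hQ2 : ∀ i x, Q i (Q i x) = Q i x := by
    intro i x
    have : Q i * Q i = Q i := by
      show Matrix.toEuclideanCLM (𝕜 := ℝ) (P i) * Matrix.toEuclideanCLM (𝕜 := ℝ) (P i) =
        Matrix.toEuclideanCLM (𝕜 := ℝ) (P i)
      rw [← _root_.map_mul, hidem]
    calc Q i (Q i x) = (Q i * Q i) x := rfl
      _ = Q i x := by rw [this]
  -- fixed points are zero
  have hfix0 : ∀ x : EuclideanSpace ℝ (Fin n), (∀ i, Q i x = x) → x = 0 := by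
    intro x hx
    have hmem : ∀ i, (WithLp.equiv 2 (Fin n → ℝ) x) ∈
        LinearMap.range (Matrix.mulVecLin (P i)) := by
      intro i
      refine ⟨WithLp.equiv 2 (Fin n → ℝ) x, ?_⟩
      have := congrArg (WithLp.equiv 2 (Fin n → ℝ)) (hx i)
      rw [hQ] at this
      simpa [Matrix.ofLp_toEuclideanCLM, Matrix.toLin'_apply] using this
    have : (WithLp.equiv 2 (Fin n → ℝ) x) ∈
        (⨅ i : Fin m, LinearMap.range (Matrix.mulVecLin (P i))) :=
      Submodule.mem_iInf _ |>.mpr hmem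
    rw [htriv, Submodule.mem_bot] at this
    have := congrArg (WithLp.equiv 2 (Fin n → ℝ)).symm this
    simpa using this
  -- every element of the index set has spec norm < 1
  have hlt : ∀ M ∈ {M : Matrix (Fin n) (Fin n) ℝ |
      ∃ l : List (Fin m), l.length = L ∧ (∀ i : Fin m, i ∈ l) ∧
        M = (l.map P).prod}, spec M < 1 := by
    rintro M ⟨l, -, hall, rfl⟩
    rw [hspec]
    have hprodCLM : Matrix.toEuclideanCLM (𝕜 := ℝ) ((l.map P).prod) = (l.map Q).prod := by
      rw [hQ]
      rw [map_list_prod]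
      rw [List.map_map]
      rfl
    rw [hprodCLM]
    apply opnorm_lt_one
    intro x hx
    rcases lt_or_eq_of_le (prod_le Q hQs hQ2 l x) with h | h
    · exact h
    · exfalso
      have := prod_eq_fix Q hQs hQ2 l x h
      exact hx (hfix0 x (fun i => this i (hall i)))
  -- the set S is finite and nonempty
  have hfin : S.Finite := by
    have h1 : {M : Matrix (Fin n) (Fin n) ℝ |
        ∃ l : List (Fin m), l.length = L ∧ (∀ i : Fin m, i ∈ l) ∧
          M = (l.map P).prod} ⊆
        (fun l : List (Fin m) => (l.map P).prod) '' {l | l.length = L} := by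
      rintro M ⟨l, hl, -, rfl⟩
      exact ⟨l, hl, rfl⟩
    exact ((List.finite_length_eq (Fin m) L).image _ |>.subset h1).image _
  have hmle : m ≤ L := by
    rw [hL]
    have : m - 1 ≤ (m - 1) ^ 2 := Nat.le_self_pow two_ne_zero _
    omega
  have hne : S.Nonempty := by
    set l₀ : List (Fin m) := List.finRange m ++ List.replicate (L - m) ⟨0, hm⟩ with hl₀
    refine ⟨spec ((l₀.map P).prod), ⟨(l₀.map P).prod, ⟨l₀, ?_, ?_, rfl⟩, rfl⟩⟩
    · rw [hl₀]; simp [List.length_finRange]; omega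
    · intro i
      rw [hl₀, List.mem_append]
      exact Or.inl (List.mem_finRange i)
  refine ⟨sSup S, ⟨hne.csSup_mem hfin, fun x hx => le_csSup hfin.bddAbove hx⟩, ?_, ?_⟩
  · obtain ⟨M, hM, hMe⟩ := hne.csSup_mem hfin
    rw [← hMe, hspec]
    exact norm_nonneg _
  · obtain ⟨M, hM, hMe⟩ := hne.csSup_mem hfin
    rw [← hMe]
    exact hlt M hM
end

section
/- Let S be an mn×mn doubly stochastic matrix and x ∈ ℝ^{mn}. If ‖Sᵀx‖₂ = ‖x‖₂ then S Sᵀ x = x. -/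
open Matrix

lemma ds_contraction (N : ℕ) (A : Matrix (Fin N) (Fin N) ℝ)
    (hnonneg : ∀ i j, 0 ≤ A i j)
    (hrow : ∀ i, ∑ j, A i j = 1) (hcol : ∀ j, ∑ i, A i j = 1)
    (v : EuclideanSpace ℝ (Fin N)) :
    ‖Matrix.toEuclideanLin (𝕜 := ℝ) A v‖ ≤ ‖v‖ := by
  rw [EuclideanSpace.norm_eq, EuclideanSpace.norm_eq]
  apply Real.sqrt_le_sqrt
  have hval : ∀ i, (Matrix.toEuclideanLin (𝕜 := ℝ) A v) i = ∑ j, A i j * v j := by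
    intro i
    rw [Matrix.toEuclideanLin_apply]
    rfl
  calc ∑ i, ‖(Matrix.toEuclideanLin (𝕜 := ℝ) A v) i‖ ^ 2
      ≤ ∑ i, ∑ j, A i j * (v j) ^ 2 := by
        apply Finset.sum_le_sum
        intro i _
        rw [hval i, Real.norm_eq_abs, sq_abs]
        have key : (∑ j, Real.sqrt (A i j) * (Real.sqrt (A i j) * v j)) ^ 2
            ≤ (∑ j, Real.sqrt (A i j) ^ 2) * (∑ j, (Real.sqrt (A i j) * v j) ^ 2) :=
          Finset.sum_mul_sq_le_sq_mul_sq Finset.univ _ _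
        have e1 : ∀ j, Real.sqrt (A i j) * (Real.sqrt (A i j) * v j) = A i j * v j := by
          intro j
          rw [← mul_assoc, Real.mul_self_sqrt (hnonneg i j)]
        have e2 : ∀ j, Real.sqrt (A i j) ^ 2 = A i j := fun j => Real.sq_sqrt (hnonneg i j)
        have e3 : ∀ j, (Real.sqrt (A i j) * v j) ^ 2 = A i j * (v j) ^ 2 := by
          intro j
          rw [mul_pow, Real.sq_sqrt (hnonneg i j)]
        simp only [e1, e2, e3] at key
        calc (∑ j, A i j * v j) ^ 2 ≤ (∑ j, A i j) * (∑ j, A i j * (v j) ^ 2) := key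
          _ = ∑ j, A i j * (v j) ^ 2 := by rw [hrow i, one_mul]
    _ = ∑ j, ‖v j‖ ^ 2 := by
        rw [Finset.sum_comm]
        apply Finset.sum_congr rfl
        intro j _
        rw [← Finset.sum_mul, hcol j, one_mul, Real.norm_eq_abs, sq_abs]

theorem doubly_stochastic_norm_preserved_fixed
    (N : ℕ) (S : Matrix (Fin N) (Fin N) ℝ)
    (hnonneg : ∀ i j, 0 ≤ S i j)
    (hrow : ∀ i, ∑ j, S i j = 1) (hcol : ∀ j, ∑ i, S i j = 1)
    (x : EuclideanSpace ℝ (Fin N))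
    (h : ‖Matrix.toEuclideanLin (𝕜 := ℝ) Sᵀ x‖ = ‖x‖) :
    Matrix.toEuclideanLin (𝕜 := ℝ) (S * Sᵀ) x = x := by
  set L := Matrix.toEuclideanLin (𝕜 := ℝ) S with hL
  have hT : Matrix.toEuclideanLin (𝕜 := ℝ) Sᵀ = LinearMap.adjoint L := by
    rw [hL, ← Matrix.toEuclideanLin_conjTranspose_eq_adjoint]
    congr 1
  have hmul : Matrix.toEuclideanLin (𝕜 := ℝ) (S * Sᵀ) x = L (LinearMap.adjoint L x) := by
    rw [← hT, hL]
    have : Matrix.toEuclideanLin (𝕜 := ℝ) (S * Sᵀ) =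
        (Matrix.toEuclideanLin (𝕜 := ℝ) S).comp (Matrix.toEuclideanLin (𝕜 := ℝ) Sᵀ) := by
      ext v i
      simp [Matrix.toEuclideanLin_apply, Matrix.mulVec_mulVec]
    rw [this]
    rfl
  set y := Matrix.toEuclideanLin (𝕜 := ℝ) Sᵀ x with hy
  have hinner : (inner ℝ (L y) x : ℝ) = ‖x‖ ^ 2 := by
    have e : (inner ℝ (L y) x : ℝ) = (inner ℝ y (LinearMap.adjoint L x) : ℝ) :=
      (LinearMap.adjoint_inner_right L y x).symm
    rw [e, ← hT, ← hy, real_inner_self_eq_norm_sq, h]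
  have hnormLy : ‖L y‖ ≤ ‖x‖ := by
    calc ‖L y‖ ≤ ‖y‖ := ds_contraction N S hnonneg hrow hcol y
      _ = ‖x‖ := h
  have hzero : ‖L y - x‖ ^ 2 ≤ 0 := by
    rw [norm_sub_sq_real, hinner]
    nlinarith [norm_nonneg (L y), norm_nonneg x]
  have : L y - x = 0 := by
    have := le_antisymm hzero (by positivity)
    have h2 : ‖L y - x‖ = 0 := by
      nlinarith [norm_nonneg (L y - x)]
    exact norm_eq_zero.mp h2
  have hLy : L y = x := sub_eq_zero.mp this
  rw [hmul, ← hT, ← hy]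
  exact hLy
end
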